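/- Let E be a globally minimal elliptic curve over ℚ with discriminant Δ, and let d be a squarefree integer coprime to Δ. Then there exist u, r, s, t ∈ ℚ with u = 2^k for some integer k (possibly negative) such that the change of variables [u, r, s, t] transforms the quadratic twist E^d into a globally minimal Weierstrass equation. -/

import Mathlib

open WeierstrassCurve

/-- The quadratic twist of a Weierstrass curve over `ℚ` by an integer `d`
(Connell's formula). -/
def twist (W : WeierstrassCurve ℚ) (d : ℤ) : WeierstrassCurve ℚ where
  a₁ := W.a₁
  a₂ := W.a₂ * d + W.a₁ ^ 2 * (d - 1) / 4
  a₃ := W.a₃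
  a₄ := W.a₄ * d ^ 2 + W.a₁ * W.a₃ * (d ^ 2 - 1) / 2
  a₆ := W.a₆ * d ^ 3 + W.a₃ ^ 2 * (d ^ 3 - 1) / 4

/-- The `p`-adic valuation of a rational number, with `v p 0 = ⊤`. -/
noncomputable def v (p : ℕ) (q : ℚ) : WithTop ℤ :=
  if q = 0 then ⊤ else ((padicValRat p q : ℤ) : WithTop ℤ)

/-- A Weierstrass equation over `ℚ` is integral if all its coefficients are integers. -/
def IsIntegralModel (W : WeierstrassCurve ℚ) : Prop :=
  W.a₁.den = 1 ∧ W.a₂.den = 1 ∧ W.a₃.den = 1 ∧ W.a₄.den = 1 ∧ W.a₆.den = 1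

/-- A Weierstrass equation over `ℚ` is (globally) minimal if it is integral and, for every
prime `p`, the `p`-adic valuation of its discriminant is minimal among the discriminants of
all integral Weierstrass equations obtained from it by a change of variables over `ℚ`. -/
def IsMinimal (W : WeierstrassCurve ℚ) : Prop :=
  IsIntegralModel W ∧ ∀ C : VariableChange ℚ, IsIntegralModel ((C • W)) →
    ∀ p : ℕ, p.Prime → v p W.Δ ≤ v p ((C • W)).Δ

/-- `W'` is a minimal model of `W` if `W'` is minimal and is obtained from `W` by a change of
variables over `ℚ`. -/
def IsMinimalModelOf (W' W : WeierstrassCurve ℚ) : Prop :=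
  IsMinimal W' ∧ ∃ C : VariableChange ℚ, (C • W) = W'

/-! ### Auxiliary material -/

private lemma two_pow_ne (n : ℕ) : ((2:ℚ) ^ n) ≠ 0 := by positivity

/-- dyadic rationals -/
def Dy (q : ℚ) : Prop := ∃ (z : ℤ) (n : ℕ), q = z / 2 ^ n

lemma Dy_int (z : ℤ) : Dy (z : ℚ) := ⟨z, 0, by norm_num⟩

lemma Dy_add {q r : ℚ} (hq : Dy q) (hr : Dy r) : Dy (q + r) := by
  obtain ⟨z, n, rfl⟩ := hq; obtain ⟨w, m, rfl⟩ := hr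
  refine ⟨z * 2 ^ m + w * 2 ^ n, n + m, ?_⟩
  rw [eq_div_iff (two_pow_ne _)]; push_cast; field_simp [two_pow_ne]
  ring

lemma Dy_mul {q r : ℚ} (hq : Dy q) (hr : Dy r) : Dy (q * r) := by
  obtain ⟨z, n, rfl⟩ := hq; obtain ⟨w, m, rfl⟩ := hr
  refine ⟨z * w, n + m, ?_⟩
  rw [eq_div_iff (two_pow_ne _)]; push_cast; field_simp [two_pow_ne]
  ring

lemma Dy_neg {q : ℚ} (hq : Dy q) : Dy (-q) := by
  obtain ⟨z, n, rfl⟩ := hq; exact ⟨-z, n, by push_cast; ring⟩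

lemma Dy_sub {q r : ℚ} (hq : Dy q) (hr : Dy r) : Dy (q - r) := by
  rw [sub_eq_add_neg]; exact Dy_add hq (Dy_neg hr)

lemma Dy_div_pow {q : ℚ} (hq : Dy q) (n : ℕ) : Dy (q / 2 ^ n) := by
  obtain ⟨z, m, rfl⟩ := hq
  exact ⟨z, m + n, by rw [div_div, ← pow_add]⟩

lemma Dy_pow {q : ℚ} (hq : Dy q) (n : ℕ) : Dy (q ^ n) := by
  induction n with
  | zero => simpa using Dy_int 1
  | succ k ih => rw [pow_succ]; exact Dy_mul ih hq

instance fact2 : Fact (Nat.Prime 2) := ⟨Nat.prime_two⟩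

/-- the 2-integral rationals -/
def O2 : Subring ℚ where
  carrier := {q | q = 0 ∨ 0 ≤ padicValRat 2 q}
  zero_mem' := Or.inl rfl
  one_mem' := Or.inr (by simp [padicValRat.one])
  add_mem' := by
    rintro a b (rfl | ha) (rfl | hb)
    · simp
    · simpa using Or.inr hb
    · simpa using Or.inr ha
    · by_cases h : a + b = 0
      · exact Or.inl h
      · exact Or.inr (le_trans (le_min ha hb) (padicValRat.min_le_padicValRat_add h))
  mul_mem' := by
    rintro a b (rfl | ha) (rfl | hb)
    · simp
    · simp
    · simp
    · by_cases h0a : a = 0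
      · exact Or.inl (by simp [h0a])
      by_cases h0b : b = 0
      · exact Or.inl (by simp [h0b])
      · exact Or.inr (by rw [padicValRat.mul h0a h0b]; positivity)
  neg_mem' := by
    rintro a (rfl | ha)
    · simp
    · exact Or.inr (by simpa [padicValRat.neg] using ha)

lemma mem_O2_iff {q : ℚ} : q ∈ O2 ↔ q = 0 ∨ 0 ≤ padicValRat 2 q := Iff.rfl

lemma O2_val {q : ℚ} (h : q ∈ O2) (h0 : q ≠ 0) : 0 ≤ padicValRat 2 q :=
  (mem_O2_iff.1 h).resolve_left h0

lemma mem_O2_of_val {q : ℚ} (h : 0 ≤ padicValRat 2 q) : q ∈ O2 := mem_O2_iff.2 (Or.inr h)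

lemma den_one_iff {q : ℚ} : q.den = 1 ↔ ∃ z : ℤ, q = (z : ℚ) := by
  constructor
  · intro h; exact ⟨q.num, by rw [← @Rat.num_div_den q, h]; simp⟩
  · rintro ⟨z, rfl⟩; exact Rat.den_intCast z

lemma val_nonneg_of_den_one (p : ℕ) {q : ℚ} (h : q.den = 1) : 0 ≤ padicValRat p q := by
  rw [padicValRat_def, h]
  simp [padicValInt]

lemma mem_O2_of_den_one {q : ℚ} (h : q.den = 1) : q ∈ O2 :=
  mem_O2_of_val (val_nonneg_of_den_one 2 h)

lemma den_one_of_dy_O2 {q : ℚ} (hd : Dy q) (ho : q ∈ O2) : q.den = 1 := by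
  obtain ⟨z, n, hq⟩ := hd
  by_cases h0 : q = 0
  · rw [h0]; rfl
  have hdvd : q.den ∣ 2 ^ n := by
    have h1 : q = Rat.divInt z (2 ^ n) := by rw [hq, Rat.divInt_eq_div]; push_cast; ring
    have h2 := Rat.den_dvd z (2 ^ n)
    rw [← h1] at h2
    have : ((q.den : ℤ)) ∣ ((2 ^ n : ℕ) : ℤ) := by exact_mod_cast h2
    exact_mod_cast this
  obtain ⟨k, hk, hden⟩ := (Nat.dvd_prime_pow Nat.prime_two).1 hdvd
  rcases Nat.eq_zero_or_pos k with hk0 | hk1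
  · rw [hden, hk0]; rfl
  exfalso
  have hnum : ¬ (2 ∣ q.num.natAbs) := by
    intro hdvd2
    have h2d : 2 ∣ q.den := hden ▸ dvd_pow_self 2 hk1.ne'
    have h1 : (2:ℕ) ∣ 1 := q.reduced ▸ Nat.dvd_gcd hdvd2 h2d
    omega
  have hval : padicValRat 2 q < 0 := by
    rw [padicValRat_def, hden]
    have h1 : padicValInt 2 q.num = 0 := by
      rw [padicValInt, padicValNat.eq_zero_of_not_dvd hnum]
    rw [h1, padicValNat.prime_pow]
    omega
  exact absurd (O2_val ho h0) (by omega)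

lemma inv_odd_mem_O2 {m : ℕ} (hm : ¬ 2 ∣ m) (h0 : m ≠ 0) : ((m : ℚ))⁻¹ ∈ O2 := by
  refine mem_O2_of_val ?_
  rw [padicValRat.inv, padicValRat.of_nat, padicValNat.eq_zero_of_not_dvd hm]
  simp

/-- dyadic approximation: any rational is `2`-adically close to a dyadic one -/
lemma dyadic_approx (q : ℚ) (n : ℕ) :
    ∃ q₂ α : ℚ, Dy q₂ ∧ α ∈ O2 ∧ q₂ = q + 2 ^ n * α := by
  set e : ℕ := q.den.factorization 2 with he
  set m : ℕ := q.den / 2 ^ e with hm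
  have hden0 : q.den ≠ 0 := q.den_nz
  have hdm : 2 ^ e * m = q.den := Nat.ordProj_mul_ordCompl_eq_self q.den 2
  have hmodd : ¬ 2 ∣ m := Nat.not_dvd_ordCompl Nat.prime_two hden0
  have hm0 : m ≠ 0 := by rintro h; rw [h, mul_zero] at hdm; exact hden0 hdm.symm
  have hcop : Nat.Coprime m (2 ^ (n + e + 1)) :=
    Nat.Coprime.pow_right _ (Nat.coprime_ordCompl Nat.prime_two hden0).symm
  obtain ⟨c, -, hc⟩ := Nat.exists_mul_mod_eq_one_of_coprime hcop
    (by have := Nat.one_lt_two_pow (n := n + e + 1) (by omega); omega)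
  have hmc1 : 1 ≤ m * c := by
    rcases Nat.eq_zero_or_pos (m * c) with h | h
    · rw [h] at hc; simp at hc
    · exact h
  have hdvd : 2 ^ (n + e + 1) ∣ m * c - 1 := by
    have : m * c % 2 ^ (n + e + 1) = 1 % 2 ^ (n + e + 1) := by
      rw [hc, Nat.mod_eq_of_lt (Nat.one_lt_two_pow (by omega))]
    exact (Nat.modEq_iff_dvd' hmc1).1 this.symm
  obtain ⟨jn, hjn⟩ := hdvd
  have key : (m : ℚ) * c = 1 + 2 ^ (n + e) * (2 * jn) := by
    have h1 : (m * c : ℕ) = 2 ^ (n + e + 1) * jn + 1 := by omega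
    have h2 := congrArg (Nat.cast (R := ℚ)) h1
    push_cast at h2
    rw [h2]; ring
  refine ⟨(q.num * c : ℚ) / 2 ^ e, (q.num * (2 * jn) : ℚ) / m, ?_, ?_, ?_⟩
  · exact Dy_div_pow (by exact_mod_cast Dy_int (q.num * c)) e
  · have h3 : ((q.num * (2 * jn) : ℚ)) / m = ((q.num * (2 * jn) : ℤ) : ℚ) * ((m:ℚ))⁻¹ := by
      push_cast; ring
    rw [h3]
    exact Subring.mul_mem _ (mem_O2_of_den_one (Rat.den_intCast _)) (inv_odd_mem_O2 hmodd hm0)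
  · have h2e : ((2:ℚ)) ^ e ≠ 0 := by positivity
    have hmne : (m : ℚ) ≠ 0 := Nat.cast_ne_zero.2 hm0
    have hq : q * (2 ^ e * m) = q.num := by
      have hd : ((q.den : ℚ)) = 2 ^ e * m := by exact_mod_cast (congrArg Nat.cast hdm).symm
      rw [← hd, Rat.mul_den_eq_num]
    have expand : q + 2 ^ n * ((q.num * (2 * jn) : ℚ) / m)
        = (q * (2 ^ e * m) + 2 ^ (n + e) * (q.num * (2 * jn))) / (2 ^ e * m) := by
      field_simp; ring
    rw [expand, hq, div_eq_div_iff h2e (mul_ne_zero h2e hmne)]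
    linear_combination ((q.num : ℚ) * 2 ^ e) * key

/-! ### Twist algebra -/

lemma twist_Δ (W : WeierstrassCurve ℚ) (d : ℤ) : (twist W d).Δ = (d:ℚ) ^ 6 * W.Δ := by
  simp only [twist, Δ, b₂, b₄, b₆, b₈]
  ring

/-- untwisting change of variables -/
def Cd (W : WeierstrassCurve ℚ) (d : ℤ) (hd : (d:ℚ) ≠ 0) : VariableChange ℚ :=
  ⟨Units.mk0 ((d:ℚ))⁻¹ (inv_ne_zero hd), 0, W.a₁ * ((d:ℚ)⁻¹ - 1) / 2,
    W.a₃ * (((d:ℚ)⁻¹) ^ 3 - 1) / 2⟩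

lemma twist_twist (W : WeierstrassCurve ℚ) (d : ℤ) (hd : (d:ℚ) ≠ 0) :
    twist (twist W d) d = ((Cd W d hd) • W) := by
  ext <;> simp only [twist, Cd, variableChange_def] <;>
    simp only [inv_inv, Units.val_inv_eq_inv_val, Units.val_mk0] <;> field_simp <;> ring

/-- twisting commutes with changes of variables -/
def kap (W : WeierstrassCurve ℚ) (d : ℤ) (C : VariableChange ℚ) : VariableChange ℚ :=
  ⟨C.u, C.r * d, C.s, C.t + C.r * W.a₁ * (1 - d) / 2⟩

lemma twist_vc (W : WeierstrassCurve ℚ) (d : ℤ) (C : VariableChange ℚ) :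
    twist ((C • W)) d = ((kap W d C) • (twist W d)) := by
  have hu : (C.u : ℚ) ≠ 0 := C.u.ne_zero
  ext <;> simp only [twist, kap, variableChange_def] <;> field_simp <;> ring

/-- the normalizing change of variables with `u = 1/2` -/
def Hvc : VariableChange ℚ := ⟨Units.mk0 (2:ℚ)⁻¹ (by norm_num), 0, 0, 0⟩

lemma T_integral (W : WeierstrassCurve ℚ) (d : ℤ) (h : IsIntegralModel W) :
    IsIntegralModel ((Hvc • (twist W d))) := by
  obtain ⟨h1, h2, h3, h4, h6⟩ := h
  obtain ⟨z1, e1⟩ := den_one_iff.1 h1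
  obtain ⟨z2, e2⟩ := den_one_iff.1 h2
  obtain ⟨z3, e3⟩ := den_one_iff.1 h3
  obtain ⟨z4, e4⟩ := den_one_iff.1 h4
  obtain ⟨z6, e6⟩ := den_one_iff.1 h6
  refine ⟨?_, ?_, ?_, ?_, ?_⟩ <;> rw [den_one_iff]
  · exact ⟨2 * z1, by
      simp only [variableChange_def, twist, Hvc, Units.val_inv_eq_inv_val, Units.val_mk0, inv_inv,
        e1]
      push_cast; ring⟩
  · exact ⟨4 * z2 * d + z1 ^ 2 * (d - 1), by
      simp only [variableChange_def, twist, Hvc, Units.val_inv_eq_inv_val, Units.val_mk0, inv_inv,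
        e1, e2]
      push_cast; ring⟩
  · exact ⟨8 * z3, by
      simp only [variableChange_def, twist, Hvc, Units.val_inv_eq_inv_val, Units.val_mk0, inv_inv,
        e3]
      push_cast; ring⟩
  · exact ⟨16 * z4 * d ^ 2 + 8 * (z1 * z3) * (d ^ 2 - 1), by
      simp only [variableChange_def, twist, Hvc, Units.val_inv_eq_inv_val, Units.val_mk0, inv_inv,
        e1, e3, e4]
      push_cast; ring⟩
  · exact ⟨64 * z6 * d ^ 3 + 16 * z3 ^ 2 * (d ^ 3 - 1), by
      simp only [variableChange_def, twist, Hvc, Units.val_inv_eq_inv_val, Units.val_mk0, inv_inv,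
        e3, e6]
      push_cast; ring⟩

lemma Δ_den_one {W : WeierstrassCurve ℚ} (h : IsIntegralModel W) : W.Δ.den = 1 := by
  obtain ⟨h1, h2, h3, h4, h6⟩ := h
  obtain ⟨z1, e1⟩ := den_one_iff.1 h1
  obtain ⟨z2, e2⟩ := den_one_iff.1 h2
  obtain ⟨z3, e3⟩ := den_one_iff.1 h3
  obtain ⟨z4, e4⟩ := den_one_iff.1 h4
  obtain ⟨z6, e6⟩ := den_one_iff.1 h6
  rw [den_one_iff]
  refine ⟨-(z1^2 + 4*z2)^2 * (z1^2*z6 + 4*z2*z6 - z1*z3*z4 + z2*z3^2 - z4^2)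
    - 8*(2*z4 + z1*z3)^3 - 27*(z3^2 + 4*z6)^2
    + 9*(z1^2 + 4*z2)*(2*z4 + z1*z3)*(z3^2 + 4*z6), ?_⟩
  simp only [Δ, b₂, b₄, b₆, b₈, e1, e2, e3, e4, e6]
  push_cast; ring

/-! ### Valuation lemmas -/

lemma vc_Δ_ne {W : WeierstrassCurve ℚ} (h : W.Δ ≠ 0) (C : VariableChange ℚ) :
    ((C • W)).Δ ≠ 0 := by
  rw [variableChange_Δ]
  exact mul_ne_zero (pow_ne_zero _ C.u⁻¹.ne_zero) h

lemma val_vc_Δ {W : WeierstrassCurve ℚ} (h : W.Δ ≠ 0) (C : VariableChange ℚ) (p : ℕ)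
    [Fact p.Prime] :
    padicValRat p ((C • W)).Δ
      = padicValRat p W.Δ - 12 * padicValRat p (C.u : ℚ) := by
  rw [variableChange_Δ, padicValRat.mul (pow_ne_zero _ C.u⁻¹.ne_zero) h,
    padicValRat.pow]
  have h2 : ((C.u⁻¹ : ℚˣ) : ℚ) = ((C.u : ℚ))⁻¹ := Units.val_inv_eq_inv_val C.u
  rw [h2, padicValRat.inv]
  push_cast
  ring

/-- From minimality, the `u` of any integrality-preserving change has nonpositive valuation. -/
lemma val_u_nonpos {E : WeierstrassCurve ℚ} (hE : IsMinimal E) (hΔ : E.Δ ≠ 0)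
    {C : VariableChange ℚ} (hC : IsIntegralModel ((C • E))) {p : ℕ}
    (hp : p.Prime) : padicValRat p (C.u : ℚ) ≤ 0 := by
  haveI : Fact p.Prime := ⟨hp⟩
  have h := hE.2 C hC p hp
  rw [v, v, if_neg hΔ, if_neg (vc_Δ_ne hΔ C)] at h
  have h2 := WithTop.coe_le_coe.mp h
  rw [val_vc_Δ hΔ C p] at h2
  omega

lemma v_le_of_val_u_nonpos {W : WeierstrassCurve ℚ} (hΔ : W.Δ ≠ 0) {C : VariableChange ℚ}
    {p : ℕ} (hp : p.Prime) (h : padicValRat p (C.u : ℚ) ≤ 0) :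
    v p W.Δ ≤ v p ((C • W)).Δ := by
  haveI : Fact p.Prime := ⟨hp⟩
  rw [v, v, if_neg hΔ, if_neg (vc_Δ_ne hΔ C)]
  have h3 := val_vc_Δ hΔ C p
  exact WithTop.coe_le_coe.mpr (by omega)

/-! ### Purification: replacing a change of variables by one with `u` a power of two -/

lemma val_two_pow (a : ℕ) : padicValRat 2 ((2:ℚ) ^ a) = a := by
  have h : ((2:ℕ):ℚ) = (2:ℚ) := by norm_num
  rw [padicValRat.pow, ← h, padicValRat.self (by norm_num)]
  ring

lemma two_pow_mem_O2 (a : ℕ) : ((2:ℚ) ^ a) ∈ O2 :=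
  mem_O2_of_den_one (den_one_iff.2 ⟨2 ^ a, by push_cast; ring⟩)

set_option maxHeartbeats 2000000 in
set_option maxRecDepth 8000 in
lemma purify {W : WeierstrassCurve ℚ} (hW : IsIntegralModel W) {C : VariableChange ℚ}
    (hC : IsIntegralModel ((C • W))) (a : ℕ)
    (hval : padicValRat 2 (C.u : ℚ) = a) :
    ∃ C₂ : VariableChange ℚ, (C₂.u : ℚ) = 2 ^ a ∧ IsIntegralModel ((C₂ • W)) := by
  classical
  set u : ℚ := (C.u : ℚ) with hu_def
  have hu0 : u ≠ 0 := C.u.ne_zero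
  set x : ℚ := (2:ℚ) ^ a with hx_def
  have hx0 : x ≠ 0 := two_pow_ne a
  set ω : ℚ := u * x⁻¹ with hω_def
  have hω0 : ω ≠ 0 := mul_ne_zero hu0 (inv_ne_zero hx0)
  have hωO : ω ∈ O2 := by
    refine mem_O2_of_val ?_
    rw [hω_def, padicValRat.mul hu0 (inv_ne_zero hx0), padicValRat.inv, hx_def, val_two_pow,
      hval]
    simp
  have huO : u ∈ O2 := mem_O2_of_val (by rw [hval]; positivity)
  -- integrality of the coefficients
  obtain ⟨h1, h2, h3, h4, h6⟩ := hW
  obtain ⟨h1', h2', h3', h4', h6'⟩ := hC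
  have A1O : W.a₁ ∈ O2 := mem_O2_of_den_one h1
  have A2O : W.a₂ ∈ O2 := mem_O2_of_den_one h2
  have A3O : W.a₃ ∈ O2 := mem_O2_of_den_one h3
  have A4O : W.a₄ ∈ O2 := mem_O2_of_den_one h4
  have A6O : W.a₆ ∈ O2 := mem_O2_of_den_one h6
  have B1O : ((C • W)).a₁ ∈ O2 := mem_O2_of_den_one h1'
  have B2O : ((C • W)).a₂ ∈ O2 := mem_O2_of_den_one h2'
  have B3O : ((C • W)).a₃ ∈ O2 := mem_O2_of_den_one h3'
  have B4O : ((C • W)).a₄ ∈ O2 := mem_O2_of_den_one h4'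
  have B6O : ((C • W)).a₆ ∈ O2 := mem_O2_of_den_one h6'
  have A1D : Dy W.a₁ := by obtain ⟨z, hz⟩ := den_one_iff.1 h1; exact hz ▸ Dy_int z
  have A2D : Dy W.a₂ := by obtain ⟨z, hz⟩ := den_one_iff.1 h2; exact hz ▸ Dy_int z
  have A3D : Dy W.a₃ := by obtain ⟨z, hz⟩ := den_one_iff.1 h3; exact hz ▸ Dy_int z
  have A4D : Dy W.a₄ := by obtain ⟨z, hz⟩ := den_one_iff.1 h4; exact hz ▸ Dy_int z
  have A6D : Dy W.a₆ := by obtain ⟨z, hz⟩ := den_one_iff.1 h6; exact hz ▸ Dy_int z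
  -- bounded denominators of r, s, t
  have idS : 2 * C.s = u * ((C • W)).a₁ - W.a₁ := by
    simp only [variableChange_a₁, Units.val_inv_eq_inv_val, ← hu_def]
    field_simp
    ring
  have hS : 2 * C.s ∈ O2 := by
    rw [idS]; exact sub_mem (mul_mem huO B1O) A1O
  have idR : 12 * C.r = 4 * u ^ 2 * ((C • W)).a₂ - 4 * W.a₂
      + 2 * (2 * C.s) * W.a₁ + (2 * C.s) ^ 2 := by
    simp only [variableChange_a₂, Units.val_inv_eq_inv_val, ← hu_def]
    field_simp
    ring
  have hR : 4 * C.r ∈ O2 := by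
    have h12 : 12 * C.r ∈ O2 := by
      rw [idR]
      exact add_mem (add_mem (sub_mem (mul_mem (mul_mem (mem_O2_of_den_one (by norm_num))
        (pow_mem huO 2)) B2O) (mul_mem (mem_O2_of_den_one (by norm_num)) A2O))
        (mul_mem (mul_mem (mem_O2_of_den_one (by norm_num)) hS) A1O)) (pow_mem hS 2)
    have h43 : 4 * C.r = (12 * C.r) * ((3:ℕ):ℚ)⁻¹ := by push_cast; ring
    rw [h43]
    exact mul_mem h12 (inv_odd_mem_O2 (by norm_num) (by norm_num))
  have idT : 8 * C.t = 4 * u ^ 3 * ((C • W)).a₃ - 4 * W.a₃ - (4 * C.r) * W.a₁ := by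
    simp only [variableChange_a₃, Units.val_inv_eq_inv_val, ← hu_def]
    field_simp
    ring
  have hT : 8 * C.t ∈ O2 := by
    rw [idT]
    exact sub_mem (sub_mem (mul_mem (mul_mem (mem_O2_of_den_one (by norm_num))
      (pow_mem huO 3)) B3O) (mul_mem (mem_O2_of_den_one (by norm_num)) A3O))
      (mul_mem hR A1O)
  -- dyadic approximations
  set N : ℕ := 6 * a + 30 with hN_def
  clear_value N
  obtain ⟨r₂, α, hr₂D, hαO, hr₂⟩ := dyadic_approx C.r N
  obtain ⟨s₂, β, hs₂D, hβO, hs₂⟩ := dyadic_approx C.s N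
  obtain ⟨t₂, γ, ht₂D, hγO, ht₂⟩ := dyadic_approx C.t N
  have hYO : ((2:ℚ) ^ N) ∈ O2 := two_pow_mem_O2 N
  -- power bookkeeping
  have hxpow : ∀ i : ℕ, x ^ i = (2:ℚ) ^ (a * i) := fun i => by rw [hx_def, ← pow_mul]
  have hNsplit : ∀ i j : ℕ, a * i + j = N → (2:ℚ) ^ N = x ^ i * 2 ^ j := by
    intro i j hij
    rw [hxpow, ← pow_add, hij]
  set C₂ : VariableChange ℚ := ⟨Units.mk0 x hx0, r₂, s₂, t₂⟩ with hC₂_def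
  have hC₂u : ((C₂.u : ℚ)) = x := rfl
  have hC₂inv : ((C₂.u⁻¹ : ℚˣ) : ℚ) = x⁻¹ := by
    rw [Units.val_inv_eq_inv_val, hC₂u]
  have hC₂r : C₂.r = r₂ := rfl
  have hC₂s : C₂.s = s₂ := rfl
  have hC₂t : C₂.t = t₂ := rfl
  have hxO : x ∈ O2 := by rw [hx_def]; exact two_pow_mem_O2 a
  have dy2 : Dy (2:ℚ) := ⟨2, 0, by norm_num⟩
  have dy3 : Dy (3:ℚ) := ⟨3, 0, by norm_num⟩
  have hsplit6 : (2:ℚ) ^ N = x ^ 6 * 2 ^ 30 := hNsplit 6 30 (by omega)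
  -- the O2-identities for the new coefficients
  have c1 : ((C₂ • W)).a₁
      = ω * ((C • W)).a₁ + x ^ 5 * 2 ^ 30 * (2 * β) := by
    rw [hω_def, hu_def]
    simp only [variableChange_a₁, hC₂inv, Units.val_inv_eq_inv_val, hC₂s]
    rw [hs₂, hsplit6]
    field_simp
    ring
  have c2 : ((C₂ • W)).a₂
      = ω ^ 2 * ((C • W)).a₂
        + x ^ 4 * 2 ^ 30 * (3 * α - β * W.a₁ - β * (2 * C.s) - (2:ℚ) ^ N * β ^ 2) := by
    rw [hω_def, hu_def]
    simp only [variableChange_a₂, hC₂inv, Units.val_inv_eq_inv_val, hC₂r, hC₂s]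
    rw [hr₂, hs₂, hsplit6]
    field_simp
    ring
  have c3 : ((C₂ • W)).a₃
      = ω ^ 3 * ((C • W)).a₃ + x ^ 3 * 2 ^ 30 * (α * W.a₁ + 2 * γ) := by
    rw [hω_def, hu_def]
    simp only [variableChange_a₃, hC₂inv, Units.val_inv_eq_inv_val, hC₂r, hC₂t]
    rw [hr₂, ht₂, hsplit6]
    field_simp
    ring
  have c4 : ((C₂ • W)).a₄
      = ω ^ 4 * ((C • W)).a₄
        + x ^ 2 * 2 ^ 27 * (-(8 * β) * W.a₃ + 16 * α * W.a₂
          - (8 * γ + 4 * (2 * C.s) * α + 2 * (4 * C.r) * β + 8 * ((2:ℚ) ^ N) * α * β) * W.a₁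
          + 12 * (4 * C.r) * α + 24 * ((2:ℚ) ^ N) * α ^ 2 - 2 * (8 * C.t) * β
          - 8 * (2 * C.s) * γ - 16 * ((2:ℚ) ^ N) * β * γ) := by
    rw [hω_def, hu_def]
    simp only [variableChange_a₄, hC₂inv, Units.val_inv_eq_inv_val, hC₂r, hC₂s, hC₂t]
    rw [hr₂, hs₂, ht₂, hsplit6]
    field_simp
    ring
  have c6 : ((C₂ • W)).a₆
      = ω ^ 6 * ((C • W)).a₆
        + 2 ^ 26 * (16 * α * W.a₄ + 8 * (4 * C.r) * α * W.a₂
          + 16 * ((2:ℚ) ^ N) * α ^ 2 * W.a₂ + 3 * (4 * C.r) ^ 2 * α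
          + 12 * (4 * C.r) * ((2:ℚ) ^ N) * α ^ 2 + 16 * ((2:ℚ) ^ N) ^ 2 * α ^ 3
          - 16 * γ * W.a₃ - 4 * (8 * C.t) * γ - 16 * ((2:ℚ) ^ N) * γ ^ 2
          - (4 * (4 * C.r) * γ + 2 * (8 * C.t) * α + 16 * ((2:ℚ) ^ N) * α * γ) * W.a₁) := by
    rw [hω_def, hu_def]
    simp only [variableChange_a₆, hC₂inv, Units.val_inv_eq_inv_val, hC₂r, hC₂t]
    rw [hr₂, ht₂, hsplit6]
    field_simp
    ring
  -- dyadic forms of the new coefficients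
  have d1 : ((C₂ • W)).a₁ = (W.a₁ + 2 * s₂) / 2 ^ (a * 1) := by
    simp only [variableChange_a₁, hC₂inv, hC₂s]
    rw [pow_mul, hx_def]
    field_simp
  have d2 : ((C₂ • W)).a₂
      = (W.a₂ - s₂ * W.a₁ + 3 * r₂ - s₂ ^ 2) / 2 ^ (a * 2) := by
    simp only [variableChange_a₂, hC₂inv, hC₂r, hC₂s]
    rw [pow_mul, hx_def]
    field_simp
  have d3 : ((C₂ • W)).a₃ = (W.a₃ + r₂ * W.a₁ + 2 * t₂) / 2 ^ (a * 3) := by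
    simp only [variableChange_a₃, hC₂inv, hC₂r, hC₂t]
    rw [pow_mul, hx_def]
    field_simp
  have d4 : ((C₂ • W)).a₄
      = (W.a₄ - s₂ * W.a₃ + 2 * r₂ * W.a₂ - (t₂ + r₂ * s₂) * W.a₁ + 3 * r₂ ^ 2
          - 2 * s₂ * t₂) / 2 ^ (a * 4) := by
    simp only [variableChange_a₄, hC₂inv, hC₂r, hC₂s, hC₂t]
    rw [pow_mul, hx_def]
    field_simp
  have d6 : ((C₂ • W)).a₆
      = (W.a₆ + r₂ * W.a₄ + r₂ ^ 2 * W.a₂ + r₂ ^ 3 - t₂ * W.a₃ - t₂ ^ 2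
          - r₂ * t₂ * W.a₁) / 2 ^ (a * 6) := by
    simp only [variableChange_a₆, hC₂inv, hC₂r, hC₂t]
    rw [pow_mul, hx_def]
    field_simp
  refine ⟨C₂, hC₂u, ?_, ?_, ?_, ?_, ?_⟩
  · refine den_one_of_dy_O2 ?_ ?_
    · rw [d1]
      refine Dy_div_pow ?_ _
      repeat
        first
        | exact hr₂D
        | exact hs₂D
        | exact ht₂D
        | exact A1D
        | exact A2D
        | exact A3D
        | exact A4D
        | exact A6D
        | exact dy2
        | exact dy3
        | apply Dy_add
        | apply Dy_sub
        | apply Dy_mul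
        | apply Dy_pow
    · rw [c1]
      repeat
        first
        | exact hαO
        | exact hβO
        | exact hγO
        | exact hωO
        | exact hxO
        | exact hS
        | exact hR
        | exact hT
        | exact A1O
        | exact A2O
        | exact A3O
        | exact A4O
        | exact A6O
        | exact B1O
        | exact B2O
        | exact B3O
        | exact B4O
        | exact B6O
        | apply add_mem
        | apply sub_mem
        | apply neg_mem
        | apply mul_mem
        | apply pow_mem
        | exact mem_O2_of_den_one (by norm_num)
  · refine den_one_of_dy_O2 ?_ ?_
    · rw [d2]
      refine Dy_div_pow ?_ _
      repeat
        first
        | exact hr₂D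
        | exact hs₂D
        | exact ht₂D
        | exact A1D
        | exact A2D
        | exact A3D
        | exact A4D
        | exact A6D
        | exact dy2
        | exact dy3
        | apply Dy_add
        | apply Dy_sub
        | apply Dy_mul
        | apply Dy_pow
    · rw [c2]
      repeat
        first
        | exact hαO
        | exact hβO
        | exact hγO
        | exact hωO
        | exact hxO
        | exact hS
        | exact hR
        | exact hT
        | exact A1O
        | exact A2O
        | exact A3O
        | exact A4O
        | exact A6O
        | exact B1O
        | exact B2O
        | exact B3O
        | exact B4O
        | exact B6O
        | apply add_mem
        | apply sub_mem
        | apply neg_mem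
        | apply mul_mem
        | apply pow_mem
        | exact mem_O2_of_den_one (by norm_num)
  · refine den_one_of_dy_O2 ?_ ?_
    · rw [d3]
      refine Dy_div_pow ?_ _
      repeat
        first
        | exact hr₂D
        | exact hs₂D
        | exact ht₂D
        | exact A1D
        | exact A2D
        | exact A3D
        | exact A4D
        | exact A6D
        | exact dy2
        | exact dy3
        | apply Dy_add
        | apply Dy_sub
        | apply Dy_mul
        | apply Dy_pow
    · rw [c3]
      repeat
        first
        | exact hαO
        | exact hβO
        | exact hγO
        | exact hωO
        | exact hxO
        | exact hS
        | exact hR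
        | exact hT
        | exact A1O
        | exact A2O
        | exact A3O
        | exact A4O
        | exact A6O
        | exact B1O
        | exact B2O
        | exact B3O
        | exact B4O
        | exact B6O
        | apply add_mem
        | apply sub_mem
        | apply neg_mem
        | apply mul_mem
        | apply pow_mem
        | exact mem_O2_of_den_one (by norm_num)
  · refine den_one_of_dy_O2 ?_ ?_
    · rw [d4]
      refine Dy_div_pow ?_ _
      repeat
        first
        | exact hr₂D
        | exact hs₂D
        | exact ht₂D
        | exact A1D
        | exact A2D
        | exact A3D
        | exact A4D
        | exact A6D
        | exact dy2
        | exact dy3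
        | apply Dy_add
        | apply Dy_sub
        | apply Dy_mul
        | apply Dy_pow
    · rw [c4]
      repeat
        first
        | exact hαO
        | exact hβO
        | exact hγO
        | exact hωO
        | exact hxO
        | exact hS
        | exact hR
        | exact hT
        | exact A1O
        | exact A2O
        | exact A3O
        | exact A4O
        | exact A6O
        | exact B1O
        | exact B2O
        | exact B3O
        | exact B4O
        | exact B6O
        | apply add_mem
        | apply sub_mem
        | apply neg_mem
        | apply mul_mem
        | apply pow_mem
        | exact mem_O2_of_den_one (by norm_num)
  · refine den_one_of_dy_O2 ?_ ?_
    · rw [d6]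
      refine Dy_div_pow ?_ _
      repeat
        first
        | exact hr₂D
        | exact hs₂D
        | exact ht₂D
        | exact A1D
        | exact A2D
        | exact A3D
        | exact A4D
        | exact A6D
        | exact dy2
        | exact dy3
        | apply Dy_add
        | apply Dy_sub
        | apply Dy_mul
        | apply Dy_pow
    · rw [c6]
      repeat
        first
        | exact hαO
        | exact hβO
        | exact hγO
        | exact hωO
        | exact hxO
        | exact hS
        | exact hR
        | exact hT
        | exact A1O
        | exact A2O
        | exact A3O
        | exact A4O
        | exact A6O
        | exact B1O
        | exact B2O
        | exact B3O
        | exact B4O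
        | exact B6O
        | apply add_mem
        | apply sub_mem
        | apply neg_mem
        | apply mul_mem
        | apply pow_mem
        | exact mem_O2_of_den_one (by norm_num)

/-! ### Transport bounds -/

lemma val_two_odd {p : ℕ} (hp : p.Prime) (hodd : p ≠ 2) [Fact p.Prime] :
    padicValRat p (2:ℚ) = 0 := by
  rw [show ((2:ℚ)) = ((2:ℕ):ℚ) by norm_num, padicValRat.of_nat,
    padicValNat.eq_zero_of_not_dvd (fun h => hodd ((Nat.prime_dvd_prime_iff_eq hp
      Nat.prime_two).1 h))]
  rfl

lemma val_sqfree_le_one {p : ℕ} (hp : p.Prime) [Fact p.Prime] {d : ℤ} (hd : Squarefree d) :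
    padicValRat p ((d:ℚ)) ≤ 1 := by
  rw [padicValRat.of_int]
  by_contra hlt
  push_neg at hlt
  have h2 : 2 ≤ padicValInt p d := by exact_mod_cast hlt
  have hdvd : ((p:ℤ)) ^ 2 ∣ d := (padicValInt_dvd_iff 2 d).2 (Or.inr h2)
  have : IsUnit ((p:ℤ)) := hd _ (by rwa [← sq])
  rw [Int.isUnit_iff] at this
  have := hp.two_le
  omega

lemma val_int_dvd_ge_one {p : ℕ} (hp : p.Prime) [Fact p.Prime] {d : ℤ} (hd0 : d ≠ 0)
    (hdvd : (p:ℤ) ∣ d) : 1 ≤ padicValRat p ((d:ℚ)) := by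
  rw [padicValRat.of_int]
  have : (p:ℤ) ^ 1 ∣ d := by rwa [pow_one]
  have h2 := (padicValInt_dvd_iff 1 d).1 this
  rcases h2 with h | h
  · exact absurd h hd0
  · exact_mod_cast h

lemma val_int_not_dvd {p : ℕ} (hp : p.Prime) [Fact p.Prime] {z : ℤ}
    (h : ¬ (p:ℤ) ∣ z) : padicValRat p ((z:ℚ)) = 0 := by
  rw [padicValRat.of_int, padicValInt.eq_zero_of_not_dvd h]
  rfl

/-- transporting an integral model of the twist class back to the class of `E`. -/
lemma transport_bound {E : WeierstrassCurve ℚ} (hE : IsMinimal E) (hΔ : E.Δ ≠ 0) {d : ℤ}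
    (hdq : (d:ℚ) ≠ 0) {G : VariableChange ℚ}
    (hG : IsIntegralModel ((G • (twist E d)))) {p : ℕ} (hp : p.Prime) :
    padicValRat p (G.u : ℚ) ≤ padicValRat p (2:ℚ) + padicValRat p ((d:ℚ)) := by
  haveI : Fact p.Prime := ⟨hp⟩
  set C' : VariableChange ℚ := Hvc * ((kap (twist E d) d G) * (Cd E d hdq)) with hC
  have hM : (Hvc • (twist ((G • (twist E d))) d))
      = (C' • E) := by
    rw [twist_vc (twist E d) d G, twist_twist E d hdq, ← mul_smul,
      ← mul_smul, mul_assoc]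
  have hint : IsIntegralModel ((C' • E)) :=
    hM ▸ T_integral _ d hG
  have hval := val_u_nonpos hE hΔ hint hp
  have hu : (C'.u : ℚ) = (2:ℚ)⁻¹ * ((G.u : ℚ) * ((d:ℚ))⁻¹) := by
    simp [hC, VariableChange.mul_def, Hvc, kap, Cd, Units.val_mul]
  rw [hu, padicValRat.mul (by norm_num) (mul_ne_zero G.u.ne_zero (inv_ne_zero hdq)),
    padicValRat.mul G.u.ne_zero (inv_ne_zero hdq), padicValRat.inv, padicValRat.inv] at hval
  omega

/-- if `d` is a squarefree integer coprime to the discriminant `Δ` of the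
globally minimal curve `E`, then some change of variables `[u, r, s, t]` with `u` a (possibly
negative) power of `2` transforms `E^d` into a globally minimal Weierstrass equation. -/
theorem exists_variableChange_two_pow_isMinimal
    (E : WeierstrassCurve ℚ) (d : ℤ) (hd : Squarefree d)
    (hE : IsMinimal E) (hΔ : E.Δ ≠ 0)
    (D : ℤ) (hD : (D : ℚ) = E.Δ) (hcop : IsCoprime d D) :
    ∃ (C : VariableChange ℚ) (k : ℤ), (C.u : ℚ) = 2 ^ k ∧
      IsMinimal ((C • (twist E d))) := by
  have hd0 : d ≠ 0 := hd.ne_zero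
  have hdq : (d:ℚ) ≠ 0 := Int.cast_ne_zero.2 hd0
  have hΔT : (twist E d).Δ ≠ 0 := by
    rw [twist_Δ]; exact mul_ne_zero (pow_ne_zero _ hdq) hΔ
  -- the valuation of `T₀.Δ`
  have hTval : ∀ p : ℕ, p.Prime → ∀ _ : Fact p.Prime,
      padicValRat p (twist E d).Δ = 6 * padicValRat p ((d:ℚ)) + padicValRat p E.Δ := by
    intro p hp hf
    rw [twist_Δ, padicValRat.mul (pow_ne_zero _ hdq) hΔ, padicValRat.pow]
    push_cast; ring
  -- `p`-adic bound for `u` of any integral model of the twist class, `p` odd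
  have hodd_bound : ∀ p : ℕ, p.Prime → p ≠ 2 → ∀ G : VariableChange ℚ,
      IsIntegralModel ((G • (twist E d))) → padicValRat p (G.u : ℚ) ≤ 0 := by
    intro p hp hp2 G hG
    haveI : Fact p.Prime := ⟨hp⟩
    by_cases hpd : (p:ℤ) ∣ d
    · -- use nonnegativity of the valuation of the discriminant
      have hnn : 0 ≤ padicValRat p ((G • (twist E d))).Δ :=
        val_nonneg_of_den_one p (Δ_den_one hG)
      rw [val_vc_Δ hΔT G p, hTval p hp ⟨hp⟩] at hnn
      have h1 : padicValRat p ((d:ℚ)) ≤ 1 := val_sqfree_le_one hp hd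
      have hEΔ0 : padicValRat p E.Δ = 0 := by
        rw [← hD]
        refine val_int_not_dvd hp ?_
        intro hpD
        obtain ⟨x, y, hxy⟩ := hcop
        have : (p:ℤ) ∣ 1 := hxy ▸ dvd_add (hpd.mul_left x) (hpD.mul_left y)
        have h2 := Int.isUnit_iff.1 (isUnit_of_dvd_one this)
        have := hp.two_le
        omega
      rw [hEΔ0] at hnn
      omega
    · have h1 := transport_bound hE hΔ hdq hG hp
      rw [val_two_odd hp hp2, val_int_not_dvd hp hpd] at h1
      omega
  -- the set of 2-adic valuations of `u` over integral models of the twist class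
  set A : ℤ → Prop := fun z => ∃ G : VariableChange ℚ,
    IsIntegralModel ((G • (twist E d))) ∧ padicValRat 2 (G.u : ℚ) = z with hA
  have hAbdd : ∃ b : ℤ, ∀ z : ℤ, A z → z ≤ b := by
    refine ⟨2, ?_⟩
    rintro z ⟨G, hG, rfl⟩
    have h1 := transport_bound hE hΔ hdq hG Nat.prime_two
    have h2 : padicValRat 2 (2:ℚ) = 1 := by
      rw [show ((2:ℚ)) = ((2:ℕ):ℚ) by norm_num, padicValRat.self (by norm_num)]
    have h3 : padicValRat 2 ((d:ℚ)) ≤ 1 := val_sqfree_le_one Nat.prime_two hd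
    omega
  have hm1 : A (-1) := by
    refine ⟨Hvc, T_integral E d hE.1, ?_⟩
    have h0 : ((Hvc.u : ℚ)) = (2:ℚ)⁻¹ := rfl
    rw [h0, padicValRat.inv,
      show ((2:ℚ)) = ((2:ℕ):ℚ) by norm_num, padicValRat.self (by norm_num)]
  obtain ⟨l, ⟨Gm, hGm, hGmval⟩, hlmax⟩ := Int.exists_greatest_of_bdd hAbdd ⟨-1, hm1⟩
  have hlge : -1 ≤ l := hlmax (-1) hm1
  -- move to the integral base `W₀ := (Hvc • (twist E d))`
  have hW₀ : IsIntegralModel ((Hvc • (twist E d))) := T_integral E d hE.1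
  set X : VariableChange ℚ := Gm * Hvc⁻¹ with hX
  have hXH : X * Hvc = Gm := by
    rw [hX, mul_assoc]
    have h1 : Hvc⁻¹ * Hvc = 1 := inv_mul_cancel Hvc
    rw [h1, mul_one]
  have hXint : IsIntegralModel ((X • ((Hvc • (twist E d))))) := by
    rw [← mul_smul, hXH]; exact hGm
  have hXu : (X.u : ℚ) = (Gm.u : ℚ) * 2 := by
    have h1 : X.u = Gm.u * Hvc.u⁻¹ := rfl
    have h2 : ((Hvc.u : ℚ)) = (2:ℚ)⁻¹ := rfl
    rw [h1, Units.val_mul, Units.val_inv_eq_inv_val, h2, inv_inv]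
  set a : ℕ := (l + 1).toNat with ha
  have hacast : ((a:ℤ)) = l + 1 := Int.toNat_of_nonneg (by omega)
  have hXval : padicValRat 2 (X.u : ℚ) = a := by
    rw [hXu, padicValRat.mul Gm.u.ne_zero (by norm_num), hGmval,
      show ((2:ℚ)) = ((2:ℕ):ℚ) by norm_num, padicValRat.self (by norm_num)]
    omega
  obtain ⟨C₂, hC₂u, hC₂int⟩ := purify hW₀ hXint a hXval
  set Df : VariableChange ℚ := C₂ * Hvc with hDf
  have hDfvc : (Df • (twist E d))
      = (C₂ • ((Hvc • (twist E d)))) := mul_smul _ _ _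
  have hDfint : IsIntegralModel ((Df • (twist E d))) := hDfvc ▸ hC₂int
  have hDfu : (Df.u : ℚ) = 2 ^ a * (2:ℚ)⁻¹ := by
    simp [hDf, VariableChange.mul_def, Hvc, Units.val_mul, hC₂u]
  have hDfval2 : padicValRat 2 (Df.u : ℚ) = l := by
    rw [hDfu, padicValRat.mul (two_pow_ne a) (by norm_num), val_two_pow, padicValRat.inv,
      show ((2:ℚ)) = ((2:ℕ):ℚ) by norm_num, padicValRat.self (by norm_num)]
    omega
  have hDfvalodd : ∀ p : ℕ, p.Prime → p ≠ 2 → ∀ _ : Fact p.Prime,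
      padicValRat p (Df.u : ℚ) = 0 := by
    intro p hp hp2 hf
    rw [hDfu, padicValRat.mul (two_pow_ne a) (by norm_num), padicValRat.pow,
      padicValRat.inv, val_two_odd hp hp2]
    ring
  refine ⟨Df, l, ?_, hDfint, ?_⟩
  · rw [hDfu, show (2:ℚ) ^ a * (2:ℚ)⁻¹ = 2 ^ ((a:ℤ) - 1) from by
      rw [zpow_sub₀ (by norm_num : (2:ℚ) ≠ 0), zpow_natCast, zpow_one, div_eq_mul_inv]]
    congr 1
    omega
  · intro C' hC' p hp
    haveI : Fact p.Prime := ⟨hp⟩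
    refine v_le_of_val_u_nonpos (vc_Δ_ne hΔT Df) hp ?_
    set G : VariableChange ℚ := C' * Df with hG
    have hGvc : (G • (twist E d))
        = (C' • ((Df • (twist E d)))) := mul_smul _ _ _
    have hGint : IsIntegralModel ((G • (twist E d))) := hGvc ▸ hC'
    have hGu : (G.u : ℚ) = (C'.u : ℚ) * (Df.u : ℚ) := by
      simp [hG, VariableChange.mul_def, Units.val_mul]
    have hsplit : padicValRat p (G.u : ℚ)
        = padicValRat p (C'.u : ℚ) + padicValRat p (Df.u : ℚ) := by
      rw [hGu, padicValRat.mul C'.u.ne_zero Df.u.ne_zero]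
    by_cases hp2 : p = 2
    · subst hp2
      have hmem : A (padicValRat 2 (G.u : ℚ)) := ⟨G, hGint, rfl⟩
      have := hlmax _ hmem
      rw [hsplit, hDfval2] at this
      omega
    · have h1 := hodd_bound p hp hp2 G hGint
      rw [hsplit, hDfvalodd p hp hp2 ⟨hp⟩] at h1
      omega
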